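/- Let S ∈ ℝ^{n×n}, q ∈ ℝ^n, a > 0, ν > 0, and suppose Q ∈ ℝ^{n×n} is symmetric positive definite and solves the algebraic Riccati equation SᵀQ + QS - 2ν Q q qᵀ Q + aI = 0. Set kᵀ = qᵀQ. Then for every λ ∈ ℂ with Re λ ≥ ν, the matrix F = S - λ q kᵀ ∈ ℂ^{n×n} is Hurwitz, i.e. all eigenvalues of F have negative real part. -/

import Mathlib

open Matrix
open scoped ComplexOrder

/-! With `k = Q q`, the matrix `F = S - λ q kᵀ` satisfies
`Fᴴ Q + Q F = SᵀQ + QS - 2 Re λ · k kᵀ`, which by the Riccati equation is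
`-(2 (Re λ - ν) k kᵀ + a I)`, negative definite as soon as `Re λ ≥ ν`.
For an eigenvector `ξ` of `F` with eigenvalue `μ`, `ξᴴ (Fᴴ Q + Q F) ξ = 2 Re μ · ξᴴ Q ξ`,
and `ξᴴ Q ξ > 0`, so `Re μ < 0`. -/

namespace Matrix

def lyapunov {n α : Type*} [Fintype n] [NonUnitalNonAssocSemiring α] [Star α]
    (F P : Matrix n n α) : Matrix n n α :=
  Fᴴ * P + P * F

theorem IsSymm.mul_vecMulVec {n : Type*} [Fintype n] {Q : Matrix n n ℝ} (hQ : Q.IsSymm)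
    (q v : n → ℝ) : Q * vecMulVec q v = vecMulVec (q ᵥ* Q) v := by
  rw [Matrix.mul_vecMulVec, ← vecMul_transpose, hQ.eq]

theorem conjTranspose_map_algebraMap {m n 𝕜 : Type*} [RCLike 𝕜] (M : Matrix m n ℝ) :
    (M.map (algebraMap ℝ 𝕜))ᴴ = Mᵀ.map (algebraMap ℝ 𝕜) := by
  rw [← conjTranspose_map _ (fun x => by simp), conjTranspose_eq_transpose_of_trivial]

variable {n 𝕜 : Type*} [Fintype n] [RCLike 𝕜]

theorem PosDef.map_algebraMap {M : Matrix n n ℝ} (hM : M.PosDef) :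
    (M.map (algebraMap ℝ 𝕜)).PosDef := by
  classical
  -- `M = Bᴴ B` with `B` invertible, and both properties survive complexification.
  open scoped MatrixOrder in
  obtain ⟨B, hB, rfl⟩ :=
    CStarAlgebra.isStrictlyPositive_iff_eq_star_mul_self.mp hM.isStrictlyPositive
  have hBc : IsUnit (B.map (algebraMap ℝ 𝕜)) := hB.map (algebraMap ℝ 𝕜).mapMatrix
  rw [Matrix.map_mul, star_eq_conjTranspose, conjTranspose_map _ (fun x => by simp)]
  exact PosDef.conjTranspose_mul_self _ (mulVec_injective_iff_isUnit.mpr hBc)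

theorem star_dotProduct_lyapunov_mulVec {F P : Matrix n n 𝕜} {μ : 𝕜} {ξ : n → 𝕜}
    (hξ : F *ᵥ ξ = μ • ξ) :
    star ξ ⬝ᵥ (lyapunov F P *ᵥ ξ) = (star μ + μ) * (star ξ ⬝ᵥ (P *ᵥ ξ)) := by
  rw [lyapunov, add_mulVec, dotProduct_add, ← mulVec_mulVec, ← mulVec_mulVec,
    dotProduct_mulVec (star ξ) Fᴴ, ← star_mulVec, hξ, star_smul, smul_dotProduct,
    mulVec_smul, dotProduct_smul, smul_eq_mul, smul_eq_mul, add_mul]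

theorem re_lt_zero_of_mem_spectrum_of_posDef_neg_lyapunov [DecidableEq n] {F P : Matrix n n 𝕜}
    (hP : P.PosDef) (hL : (-lyapunov F P).PosDef) {μ : 𝕜} (hμ : μ ∈ spectrum 𝕜 F) :
    RCLike.re μ < 0 := by
  rw [← spectrum_toLin', ← Module.End.hasEigenvalue_iff_mem_spectrum] at hμ
  obtain ⟨ξ, hξ⟩ := hμ.exists_hasEigenvector
  have hFξ : F *ᵥ ξ = μ • ξ := by simpa using hξ.apply_eq_smul
  have hLξ := hL.re_dotProduct_pos hξ.2
  have hPξ := hP.re_dotProduct_pos hξ.2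
  have hre : star μ + μ = ((2 * RCLike.re μ : ℝ) : 𝕜) := by
    rw [RCLike.star_def, add_comm, RCLike.add_conj]; push_cast; rfl
  rw [neg_mulVec, dotProduct_neg, map_neg, star_dotProduct_lyapunov_mulVec hFξ, hre,
    RCLike.re_ofReal_mul] at hLξ
  nlinarith

theorem lyapunov_map_sub_smul_vecMulVec {S Q : Matrix n n ℝ} (hQ : Q.IsSymm) (q : n → ℝ)
    (lam : 𝕜) :
    lyapunov (S.map (algebraMap ℝ 𝕜) - lam • (vecMulVec q (q ᵥ* Q)).map (algebraMap ℝ 𝕜))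
        (Q.map (algebraMap ℝ 𝕜)) =
      (Sᵀ * Q + Q * S - (2 * RCLike.re lam) • vecMulVec (q ᵥ* Q) (q ᵥ* Q)).map
        (algebraMap ℝ 𝕜) := by
  classical
  let φ := (Algebra.ofId ℝ 𝕜).mapMatrix (m := n)
  have hφ (M : Matrix n n ℝ) : (φ M)ᴴ = φ Mᵀ := conjTranspose_map_algebraMap M
  have hK₁ : Q * vecMulVec q (q ᵥ* Q) = vecMulVec (q ᵥ* Q) (q ᵥ* Q) := hQ.mul_vecMulVec q _
  have hK₂ : (vecMulVec q (q ᵥ* Q))ᵀ * Q = vecMulVec (q ᵥ* Q) (q ᵥ* Q) := by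
    rw [transpose_vecMulVec, vecMulVec_mul]
  have hre : star lam + lam = algebraMap ℝ 𝕜 (2 * RCLike.re lam) := by
    rw [RCLike.star_def, add_comm, RCLike.add_conj, map_mul, map_ofNat]
  change (φ S - lam • φ _)ᴴ * φ Q + φ Q * (φ S - lam • φ _) = φ _
  rw [conjTranspose_sub, conjTranspose_smul, hφ, hφ, sub_mul, mul_sub, smul_mul_assoc,
    mul_smul_comm, ← map_mul, ← map_mul, ← map_mul, ← map_mul, hK₁, hK₂, map_sub, map_add,
    map_smul, ← algebraMap_smul 𝕜 (2 * RCLike.re lam), ← hre, add_smul]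
  abel

end Matrix

theorem riccati_simultaneous_stabilization_general (n : ℕ)
    (S : Matrix (Fin n) (Fin n) ℝ) (q : Fin n → ℝ) (a ν : ℝ)
    (ha : 0 < a)
    (Q : Matrix (Fin n) (Fin n) ℝ) (hQpos : Q.PosDef)
    (hRiccati : Sᵀ * Q + Q * S - (2 * ν) • (Q * Matrix.vecMulVec q q * Q)
        + a • (1 : Matrix (Fin n) (Fin n) ℝ) = 0)
    (k : Fin n → ℝ) (hk : k = Matrix.vecMul q Q)
    (lam : ℂ) (hlam : ν ≤ lam.re)
    (F : Matrix (Fin n) (Fin n) ℂ)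
    (hF : F = S.map (algebraMap ℝ ℂ)
        - lam • (Matrix.vecMulVec q k).map (algebraMap ℝ ℂ)) :
    ∀ μ ∈ spectrum ℂ F, μ.re < 0 := by
  have hQ : Q.IsSymm := by simpa using hQpos.isHermitian
  subst hk hF
  have hK : Q * vecMulVec q q * Q = vecMulVec (q ᵥ* Q) (q ᵥ* Q) := by
    rw [hQ.mul_vecMulVec, vecMulVec_mul]
  have hL : Sᵀ * Q + Q * S - (2 * lam.re) • vecMulVec (q ᵥ* Q) (q ᵥ* Q) =
      -((2 * (lam.re - ν)) • vecMulVec (q ᵥ* Q) (q ᵥ* Q) + a • 1) := by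
    rw [hK] at hRiccati
    linear_combination (norm := module) hRiccati
  have hM : ((2 * (lam.re - ν)) • vecMulVec (q ᵥ* Q) (q ᵥ* Q) + a • 1).PosDef :=
    PosDef.posSemidef_add ((posSemidef_vecMulVec_self_star _).smul (by linarith))
      (PosDef.one.smul ha)
  intro μ hμ
  refine re_lt_zero_of_mem_spectrum_of_posDef_neg_lyapunov hQpos.map_algebraMap ?_ hμ
  rw [lyapunov_map_sub_smul_vecMulVec hQ, RCLike.re_to_complex, hL, Matrix.map_neg _ (map_neg _),
    neg_neg]
  exact hM.map_algebraMap

/-- Riccati-based simultaneous stabilization: if `Q > 0` is symmetric and solves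
`SᵀQ + QS - 2ν Q q qᵀ Q + aI = 0` with `a, ν > 0` and `kᵀ = qᵀQ`, then for every
`λ ∈ ℂ` with `Re λ ≥ ν` the matrix `F = S - λ q kᵀ` is Hurwitz. -/
theorem riccati_simultaneous_stabilization (n : ℕ)
    (S : Matrix (Fin n) (Fin n) ℝ) (q : Fin n → ℝ) (a ν : ℝ)
    (ha : 0 < a) (hν : 0 < ν)
    (Q : Matrix (Fin n) (Fin n) ℝ) (hQsymm : Q.IsSymm) (hQpos : Q.PosDef)
    (hRiccati : Sᵀ * Q + Q * S - (2 * ν) • (Q * Matrix.vecMulVec q q * Q)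
        + a • (1 : Matrix (Fin n) (Fin n) ℝ) = 0)
    (k : Fin n → ℝ) (hk : k = Matrix.vecMul q Q)
    (lam : ℂ) (hlam : ν ≤ lam.re)
    (F : Matrix (Fin n) (Fin n) ℂ)
    (hF : F = S.map (algebraMap ℝ ℂ)
        - lam • (Matrix.vecMulVec q k).map (algebraMap ℝ ℂ)) :
    ∀ μ ∈ spectrum ℂ F, μ.re < 0 :=
  riccati_simultaneous_stabilization_general n S q a ν ha Q hQpos hRiccati k hk lam hlam F hF
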